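/- Let n ≥ 2 and let x_1,…,x_n : ℝ → ℝ be functions, each differentiable at 0, whose values x_1(0),…,x_n(0) are pairwise distinct, strictly positive, and sum to 1. Define r_q(t) = e_{n−q}(x(t))/e_n(x(t)) for q = 1,…,n (with e_0 = 1). Suppose that for all t in a neighbourhood of 0, r_q(t) = r_q(0) for every q ∈ {1,…,n−1}, while r_n(t) = r_n(0) + t. Then the function t ↦ −∑_{k=1}^n x_k(t)·ln(x_k(t)) is differentiable at 0 with derivative equal to s_n·(1 − Q), where s_n = ∏_k x_k(0), Q = −∑_{k=1}^n (x_k(0)^n · ln x_k(0)) / P_k, and P_k = ∏_{i≠k}(x_k(0) − x_i(0)). (This is the alternative characterisation ∂S/∂r_n = s_n(s_1 − Q) of subentropy.) -/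

import Mathlib

/-- The `j`-th elementary symmetric polynomial of `x : Fin n → ℝ` (with `e_0 = 1`). -/
noncomputable def esymm (n j : ℕ) (x : Fin n → ℝ) : ℝ :=
  ∑ s ∈ Finset.powersetCard j (Finset.univ : Finset (Fin n)), ∏ u ∈ s, x u

/-!
Write `a = x(0)`, `s = ∏ a_k` and `c t = (1 + s t)⁻¹`. The hypotheses say that `e_n(x(t)) = s c(t)`
and that every ratio `e_j / e_n` with `j ≥ 1` is constant, so every `e_j(x(t))`, `j ≥ 1`, equals
`c(t) e_j(a)`. By Vieta, `∏_k (z - x_k(t)) = z^n + c(t) (∏_k (z - a_k) - z^n)` for all `z`.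
Differentiating at `t = 0` and evaluating at `z = a_m` gives `x_m'(0) P_m = c'(0) a_m^n = -s a_m^n`,
while `e_1 = 1` gives `∑ x_k'(0) = c'(0) = -s`. Hence
`S'(0) = -∑ x_k'(0) (ln a_k + 1) = s (∑ a_k^n ln a_k / P_k + 1) = s (1 - Q)`.
-/

open Finset Filter Topology

section Esymm

variable {n : ℕ}

lemma esymm_zero (y : Fin n → ℝ) : esymm n 0 y = 1 := by
  simp [esymm]

lemma esymm_one (y : Fin n → ℝ) : esymm n 1 y = ∑ k, y k := by
  simp [esymm, powersetCard_one]

lemma esymm_self (y : Fin n → ℝ) : esymm n n y = ∏ k, y k := by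
  have h := powersetCard_self (univ : Finset (Fin n))
  rw [card_univ, Fintype.card_fin] at h
  rw [esymm, h, sum_singleton]

lemma prod_sub_eq_sum_esymm (y : Fin n → ℝ) (z : ℝ) :
    ∏ k, (z - y k) = ∑ j ∈ range (n + 1), (-1) ^ j * esymm n j y * z ^ (n - j) := by
  have := congrArg (Polynomial.eval z) (Multiset.prod_X_sub_X_eq_sum_esymm (univ.val.map y))
  rw [Multiset.map_map, prod_map_val, Polynomial.eval_prod, Polynomial.eval_finsetSum] at this
  simp only [Finset.esymm_map_val, Multiset.card_map, card_val, card_univ, Fintype.card_fin] at this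
  simpa [esymm, mul_assoc, Polynomial.eval_finsetSum, Polynomial.eval_prod] using this

lemma prod_sub_eq_of_esymm_eq_mul {y a : Fin n → ℝ} {c : ℝ}
    (h : ∀ j, 1 ≤ j → j ≤ n → esymm n j y = c * esymm n j a) (z : ℝ) :
    ∏ k, (z - y k) = z ^ n + c * (∏ k, (z - a k) - z ^ n) := by
  rw [prod_sub_eq_sum_esymm, prod_sub_eq_sum_esymm, sum_range_succ', sum_range_succ',
    esymm_zero, esymm_zero, Nat.sub_zero]
  have hterm : ∀ j ∈ range n, (-1) ^ (j + 1) * esymm n (j + 1) y * z ^ (n - (j + 1)) =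
      c * ((-1) ^ (j + 1) * esymm n (j + 1) a * z ^ (n - (j + 1))) := fun j hj => by
    rw [h (j + 1) j.succ_pos (mem_range.mp hj)]
    ring
  rw [sum_congr rfl hterm, ← mul_sum]
  ring

lemma esymm_eq_mul_of_div_esymm_self_eq {y a : Fin n → ℝ} (hy : esymm n n y ≠ 0)
    (ha : esymm n n a ≠ 0)
    (hfix : ∀ q, 1 ≤ q → q ≤ n - 1 →
      esymm n (n - q) y / esymm n n y = esymm n (n - q) a / esymm n n a)
    (j : ℕ) (hj₁ : 1 ≤ j) (hjn : j ≤ n) :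
    esymm n j y = esymm n n y / esymm n n a * esymm n j a := by
  rcases hjn.lt_or_eq with hjn | rfl
  · have := hfix (n - j) (by omega) (by omega)
    rw [Nat.sub_sub_self hjn.le] at this
    field_simp at this ⊢
    linarith
  · field_simp

end Esymm

lemma hasDerivAt_neg_sum_mul_log {ι : Type*} [Fintype ι] {x : ι → ℝ → ℝ} {v : ι → ℝ} {t₀ : ℝ}
    (hx : ∀ k, HasDerivAt (x k) (v k) t₀) (hne : ∀ k, x k t₀ ≠ 0) :
    HasDerivAt (fun t => -∑ k, x k t * Real.log (x k t))
      (-∑ k, v k * (Real.log (x k t₀) + 1)) t₀ := by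
  have h := HasDerivAt.fun_sum fun k (_ : k ∈ univ) =>
    (Real.hasDerivAt_negMulLog (hne k)).comp t₀ (hx k)
  simp only [Function.comp_def, Real.negMulLog, neg_mul, sum_neg_distrib] at h
  refine h.congr_deriv ?_
  rw [← sum_neg_distrib]
  exact sum_congr rfl fun k _ => by ring

lemma eq_div_of_hasDerivAt_prod_sub {n : ℕ} {x : Fin n → ℝ → ℝ} {v : Fin n → ℝ} {c : ℝ → ℝ}
    {c' t₀ : ℝ} (hx : ∀ k, HasDerivAt (x k) (v k) t₀) (hc : HasDerivAt c c' t₀)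
    (hdist : ∀ k l, k ≠ l → x k t₀ ≠ x l t₀)
    (hprod : ∀ᶠ t in 𝓝 t₀, ∀ z, ∏ k, (z - x k t) = z ^ n + c t * (∏ k, (z - x k t₀) - z ^ n))
    (m : Fin n) :
    v m = c' * x m t₀ ^ n / ∏ i ∈ univ.erase m, (x m t₀ - x i t₀) := by
  set z := x m t₀
  set P := ∏ i ∈ univ.erase m, (z - x i t₀)
  have hP : P ≠ 0 :=
    prod_ne_zero_iff.mpr fun i hi => sub_ne_zero.mpr (hdist m i (ne_of_mem_erase hi).symm)
  -- Only the factor `z - x m t` vanishes at `t₀`, so the product rule leaves a single term.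
  have hlhs : HasDerivAt (fun t => ∏ k, (z - x k t)) (-v m * P) t₀ := by
    have hrest := HasDerivAt.fun_finsetProd fun i (_ : i ∈ univ.erase m) => (hx i).const_sub z
    refine (((hx m).const_sub z).fun_mul hrest).congr_of_eventuallyEq
      (Eventually.of_forall fun t => ?_) |>.congr_deriv ?_
    · exact (mul_prod_erase univ (fun k => z - x k t) (mem_univ m)).symm
    · simp [z, P]
  have hrhs : HasDerivAt (fun t => ∏ k, (z - x k t)) (-c' * z ^ n) t₀ := by
    have h := (hc.mul_const (∏ k, (z - x k t₀) - z ^ n)).const_add (z ^ n)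
    rw [prod_eq_zero (mem_univ m) (sub_self z)] at h
    refine (h.congr_of_eventuallyEq ?_).congr_deriv (by ring)
    filter_upwards [hprod] with t ht
    rw [ht z, prod_eq_zero (mem_univ m) (sub_self z)]
  field_simp
  linarith [hlhs.unique hrhs]

theorem stmt_15_general (n : ℕ) (x : Fin n → ℝ → ℝ)
    (hdiff : ∀ k, DifferentiableAt ℝ (x k) 0)
    (hdist : ∀ k l, k ≠ l → x k 0 ≠ x l 0)
    (hpos : ∀ k, 0 < x k 0)
    (hsum : ∑ k, x k 0 = 1)
    (hfix : ∀ᶠ t in nhds (0 : ℝ), ∀ q, 1 ≤ q → q ≤ n - 1 →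
      esymm n (n - q) (fun k => x k t) / esymm n n (fun k => x k t)
        = esymm n (n - q) (fun k => x k 0) / esymm n n (fun k => x k 0))
    (hvar : ∀ᶠ t in nhds (0 : ℝ),
      esymm n 0 (fun k => x k t) / esymm n n (fun k => x k t)
        = esymm n 0 (fun k => x k 0) / esymm n n (fun k => x k 0) + t) :
    HasDerivAt (fun t => -∑ k, x k t * Real.log (x k t))
      ((∏ k, x k 0) * (1 - (-∑ k, (x k 0) ^ n * Real.log (x k 0) /
          ∏ i ∈ Finset.univ.erase k, (x k 0 - x i 0)))) 0 := by
  set s := ∏ k, x k 0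
  have hs : s ≠ 0 := (prod_pos fun k _ => hpos k).ne'
  have hes : esymm n n (fun k => x k 0) = s := esymm_self _
  have hn : 1 ≤ n := Nat.one_le_iff_ne_zero.mpr fun h => by subst h; simp at hsum
  have hv k : HasDerivAt (x k) (deriv (x k) 0) 0 := (hdiff k).hasDerivAt
  have hc : HasDerivAt (fun t => (1 + s * t)⁻¹) (-s) 0 :=
    (((hasDerivAt_id (0 : ℝ)).const_mul s).const_add 1).inv (by simp) |>.congr_deriv (by simp)
  have hscale : ∀ᶠ t in 𝓝 0, ∀ j, 1 ≤ j → j ≤ n →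
      esymm n j (fun k => x k t) = (1 + s * t)⁻¹ * esymm n j (fun k => x k 0) := by
    have hne : ∀ᶠ t in 𝓝 (0 : ℝ), 1 + s * t ≠ 0 :=
      (by fun_prop : Continuous fun t : ℝ => 1 + s * t).continuousAt.eventually_ne (by simp)
    filter_upwards [hfix, hvar, hne] with t hfixt hvart hnet
    rw [esymm_zero, esymm_zero, hes] at hvart
    have hself : esymm n n (fun k => x k t) = s * (1 + s * t)⁻¹ := by
      rw [← inv_inv (esymm n n _), ← one_div (esymm n n fun k => x k t), hvart]
      field_simp
    intro j hj₁ hjn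
    rw [esymm_eq_mul_of_div_esymm_self_eq (by simp [hself, hs, hnet]) (by rwa [hes]) hfixt
      j hj₁ hjn, hself, hes]
    field_simp
  have hvm m : deriv (x m) 0 = -s * x m 0 ^ n / ∏ i ∈ univ.erase m, (x m 0 - x i 0) :=
    eq_div_of_hasDerivAt_prod_sub hv hc hdist
      (hscale.mono fun t ht => prod_sub_eq_of_esymm_eq_mul ht) m
  have hsumv : ∑ k, deriv (x k) 0 = -s := by
    refine (HasDerivAt.fun_sum fun k _ => hv k).unique (hc.congr_of_eventuallyEq ?_)
    filter_upwards [hscale] with t ht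
    simpa [esymm_one, hsum] using ht 1 le_rfl hn
  refine (hasDerivAt_neg_sum_mul_log hv fun k => (hpos k).ne').congr_deriv ?_
  simp only [mul_add, mul_one, sum_add_distrib, hsumv]
  simp only [hvm, div_mul_eq_mul_div, mul_assoc, ← mul_sum, mul_div_assoc]
  ring

/-- The alternative characterisation `∂S/∂r_n = s_n(s_1 − Q)` of the subentropy, where
`r_q = e_{n−q}/e_n` and the Shannon entropy is viewed as a function of `r_1, …, r_n`
at a probability distribution (`s_1 = 1`). -/
theorem stmt_15 (n : ℕ) (hn : 2 ≤ n) (x : Fin n → ℝ → ℝ)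
    (hdiff : ∀ k, DifferentiableAt ℝ (x k) 0)
    (hdist : ∀ k l, k ≠ l → x k 0 ≠ x l 0)
    (hpos : ∀ k, 0 < x k 0)
    (hsum : ∑ k, x k 0 = 1)
    (hfix : ∀ᶠ t in nhds (0 : ℝ), ∀ q, 1 ≤ q → q ≤ n - 1 →
      esymm n (n - q) (fun k => x k t) / esymm n n (fun k => x k t)
        = esymm n (n - q) (fun k => x k 0) / esymm n n (fun k => x k 0))
    (hvar : ∀ᶠ t in nhds (0 : ℝ),
      esymm n 0 (fun k => x k t) / esymm n n (fun k => x k t)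
        = esymm n 0 (fun k => x k 0) / esymm n n (fun k => x k 0) + t) :
    HasDerivAt (fun t => -∑ k, x k t * Real.log (x k t))
      ((∏ k, x k 0) * (1 - (-∑ k, (x k 0) ^ n * Real.log (x k 0) /
          ∏ i ∈ Finset.univ.erase k, (x k 0 - x i 0)))) 0 :=
  stmt_15_general n x hdiff hdist hpos hsum hfix hvar
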